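/- arXiv:2408.08499 — 5 statements merged into one kernel-verified Lean document; each statement's English description precedes it below -/
import Mathlib

section
/- For the scalar linear shift with squared loss, PR(θ_PO) = (σ₀²(1-μ)² + μ₀²σ² + 2σσ₀μ₀(1-μ))/(2(σ² + (1-μ)²)). -/
/-! The performative risk at `θ` is `(((1 - μ) θ - μ₀)² + (σ₀ + σ θ)²) / 2`, since `z₀` is
standardized. This is the squared distance from `θ • (1 - μ, σ)` to `(μ₀, -σ₀)`, and `θ_PO` is the
orthogonal projection parameter, so by Lagrange's identity the minimal value is the squared
determinant `(σ₀ (1 - μ) + μ₀ σ)²` divided by `σ² + (1 - μ)²`. -/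

open MeasureTheory

theorem integral_const_add_mul_sq {Ω : Type*} [MeasurableSpace Ω] {P : Measure Ω}
    [IsProbabilityMeasure P] {z : Ω → ℝ} (hz : MemLp z 2 P) (a b : ℝ) :
    ∫ ω, (a + b * z ω) ^ 2 ∂P = a ^ 2 + 2 * a * b * ∫ ω, z ω ∂P + b ^ 2 * ∫ ω, z ω ^ 2 ∂P := by
  have hz₁ : Integrable z P := hz.integrable one_le_two
  have hz₂ : Integrable (fun ω ↦ z ω ^ 2) P := hz.integrable_sq
  have hexpand : (fun ω ↦ (a + b * z ω) ^ 2)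
      = fun ω ↦ (a ^ 2 + (2 * a * b) * z ω) + b ^ 2 * z ω ^ 2 := by
    funext ω; ring
  have hlin : Integrable (fun ω ↦ a ^ 2 + (2 * a * b) * z ω) P :=
    (integrable_const _).add (hz₁.const_mul _)
  rw [hexpand, integral_add hlin (hz₂.const_mul _),
    integral_add (integrable_const _) (hz₁.const_mul _), integral_const_mul, integral_const_mul,
    integral_const, probReal_univ, one_smul]

theorem sq_mul_sub_add_sq_mul_sub_of_eq_div {p q r s θ : ℝ} (hpq : p ^ 2 + q ^ 2 ≠ 0)
    (hθ : θ = (p * r + q * s) / (p ^ 2 + q ^ 2)) :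
    (p * θ - r) ^ 2 + (q * θ - s) ^ 2 = (p * s - q * r) ^ 2 / (p ^ 2 + q ^ 2) := by
  subst hθ
  field_simp
  ring

theorem stmt5_general {Ω : Type*} [MeasureSpace Ω] [IsProbabilityMeasure (volume : Measure Ω)]
    (z₀ : Ω → ℝ) (hz : MemLp z₀ 2 (volume : Measure Ω))
    (hmean : ∫ ω, z₀ ω = 0) (hvar : ∫ ω, (z₀ ω) ^ 2 = 1)
    (σ₀ σ μ₀ μ : ℝ) (hσ : 0 < σ)
    (θPO : ℝ) (hPO : θPO = ((1 - μ) * μ₀ - σ₀ * σ) / (σ ^ 2 + (1 - μ) ^ 2)) :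
    ∫ ω, (θPO - ((σ₀ + σ * θPO) * z₀ ω + μ₀ + μ * θPO)) ^ 2 / 2
      = (σ₀ ^ 2 * (1 - μ) ^ 2 + μ₀ ^ 2 * σ ^ 2 + 2 * σ * σ₀ * μ₀ * (1 - μ))
          / (2 * (σ ^ 2 + (1 - μ) ^ 2)) := by
  have hD : σ ^ 2 + (1 - μ) ^ 2 ≠ 0 := by positivity
  have hrisk : ∫ ω, (θPO - ((σ₀ + σ * θPO) * z₀ ω + μ₀ + μ * θPO)) ^ 2 / 2
      = (((1 - μ) * θPO - μ₀) ^ 2 + (σ * θPO - -σ₀) ^ 2) / 2 := by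
    simp_rw [integral_div, show ∀ ω, θPO - ((σ₀ + σ * θPO) * z₀ ω + μ₀ + μ * θPO)
        = ((1 - μ) * θPO - μ₀) + (-(σ₀ + σ * θPO)) * z₀ ω from fun ω ↦ by ring]
    rw [integral_const_add_mul_sq hz, hmean, hvar]
    ring
  have hθ : θPO = ((1 - μ) * μ₀ + σ * -σ₀) / ((1 - μ) ^ 2 + σ ^ 2) := by
    rw [hPO]; ring
  rw [hrisk, sq_mul_sub_add_sq_mul_sub_of_eq_div (by rwa [add_comm]) hθ]
  field_simp
  ring

/-- `PR(θ_PO) = (σ₀²(1-μ)² + μ₀²σ² + 2σσ₀μ₀(1-μ)) / (2(σ² + (1-μ)²))`. -/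
theorem stmt5 {Ω : Type*} [MeasureSpace Ω] [IsProbabilityMeasure (volume : Measure Ω)]
    (z₀ : Ω → ℝ) (hz : MemLp z₀ 2 (volume : Measure Ω))
    (hmean : ∫ ω, z₀ ω = 0) (hvar : ∫ ω, (z₀ ω) ^ 2 = 1)
    (σ₀ σ μ₀ μ : ℝ) (hσ₀ : 0 < σ₀) (hσ : 0 < σ) (hμ : μ < 1)
    (θPO : ℝ) (hPO : θPO = ((1 - μ) * μ₀ - σ₀ * σ) / (σ ^ 2 + (1 - μ) ^ 2)) :
    ∫ ω, (θPO - ((σ₀ + σ * θPO) * z₀ ω + μ₀ + μ * θPO)) ^ 2 / 2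
      = (σ₀ ^ 2 * (1 - μ) ^ 2 + μ₀ ^ 2 * σ ^ 2 + 2 * σ * σ₀ * μ₀ * (1 - μ))
          / (2 * (σ ^ 2 + (1 - μ) ^ 2)) :=
  stmt5_general z₀ hz hmean hvar σ₀ σ μ₀ μ hσ θPO hPO
end

section
/- Under a pure mean shift with Mahalanobis loss, every stationary point of the performative risk equals (I - μ)⁻¹μ₀; hence the performatively optimal, performatively stable, and stationary solution sets coincide. -/
open MeasureTheory

open scoped RealInnerProductSpace

/-!
Since `z₀` is centred, the cross terms of the loss integrate to zero and
`PR θ = ½ ⟪(I - μ) θ - μ₀, A ((I - μ) θ - μ₀)⟫ + const`. The gradient of this quadratic is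
`(I - μ)ᵀ A ((I - μ) θ - μ₀)`, which vanishes exactly when `(I - μ) θ = μ₀`, because `I - μ` is
invertible (Neumann series, `‖μ‖ < 1`) and `A` is positive definite; and at that point the
quadratic term is `0`, its minimum.
-/

section Integral

variable {α E : Type*} [MeasurableSpace α] {μ : Measure α}
  [NormedAddCommGroup E] [InnerProductSpace ℝ E]

theorem MeasureTheory.MemLp.integrable_inner {f g : α → E} (hf : MemLp f 2 μ)
    (hg : MemLp g 2 μ) :
    Integrable (fun x => ⟪f x, g x⟫) μ :=
  (L2.integrable_inner (hf.toLp f) (hg.toLp g)).congr <| by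
    filter_upwards [hf.coeFn_toLp, hg.coeFn_toLp] with x hfx hgx
    rw [hfx, hgx]

variable [CompleteSpace E] [IsProbabilityMeasure μ]

theorem integral_inner_sub_apply_sub_of_integral_eq_zero (A : E →L[ℝ] E) {g : α → E}
    (hg : MemLp g 2 μ) (hmean : ∫ x, g x ∂μ = 0) (v : E) :
    ∫ x, ⟪v - g x, A (v - g x)⟫ ∂μ = ⟪v, A v⟫ + ∫ x, ⟪g x, A (g x)⟫ ∂μ := by
  have hgi : Integrable g μ := hg.integrable one_le_two
  have hAgi : Integrable (fun x => A (g x)) μ := A.integrable_comp hgi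
  have hquad : Integrable (fun x => ⟪g x, A (g x)⟫) μ := hg.integrable_inner (A.comp_memLp' hg)
  have hcross₁ : ∫ x, ⟪v, A (g x)⟫ ∂μ = 0 := by
    rw [integral_inner hAgi, A.integral_comp_comm hgi, hmean, map_zero, inner_zero_right]
  have hcross₂ : ∫ x, ⟪g x, A v⟫ ∂μ = 0 := by
    simp_rw [real_inner_comm (A v) (g _)]
    rw [integral_inner hgi, hmean, inner_zero_right]
  have hexpand : ∀ x, ⟪v - g x, A (v - g x)⟫
      = ⟪v, A v⟫ - ⟪v, A (g x)⟫ - (⟪g x, A v⟫ - ⟪g x, A (g x)⟫) := fun x => by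
    rw [map_sub, inner_sub_left, inner_sub_right, inner_sub_right]
  have hi₁ : Integrable (fun x => ⟪v, A v⟫ - ⟪v, A (g x)⟫) μ :=
    (integrable_const _).sub (hAgi.const_inner v)
  have hi₂ : Integrable (fun x => ⟪g x, A v⟫ - ⟪g x, A (g x)⟫) μ :=
    (hgi.inner_const (A v)).sub hquad
  simp_rw [hexpand]
  rw [integral_sub hi₁ hi₂, integral_sub (integrable_const _) (hAgi.const_inner v),
    integral_sub (hgi.inner_const (A v)) hquad, hcross₁, hcross₂, integral_const,
    probReal_univ, one_smul]
  ring

end Integral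

section Derivative

variable {E F : Type*} [NormedAddCommGroup E] [InnerProductSpace ℝ E]
  [NormedAddCommGroup F] [InnerProductSpace ℝ F]

theorem LinearMap.IsSymmetric.hasFDerivAt_inner_sub_apply_sub_div_two {A : F →L[ℝ] F}
    (hA : (A : F →ₗ[ℝ] F).IsSymmetric) (T : E →L[ℝ] F) (b : F) (θ : E) :
    HasFDerivAt (fun θ => ⟪T θ - b, A (T θ - b)⟫ / 2) ((innerSL ℝ (A (T θ - b))).comp T) θ := by
  have h := ((hA.hasStrictFDerivAt_reApplyInnerSelf (T θ - b)).hasFDerivAt.comp θ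
    (T.hasFDerivAt.sub_const b)).mul_const (1 / 2 : ℝ)
  refine (h.congr_fderiv ?_).congr_of_eventuallyEq (.of_forall fun x => ?_)
  · ext; simp
  · simp only [Function.comp_apply, ContinuousLinearMap.reApplyInnerSelf_apply, RCLike.re_to_real,
      real_inner_comm]
    ring

theorem innerSL_comp_eq_zero_iff {T : E →L[ℝ] F} (hT : Function.Surjective T) {w : F} :
    (innerSL ℝ w).comp T = 0 ↔ w = 0 := by
  refine ⟨fun h => ?_, fun h => by simp [h]⟩
  obtain ⟨x, rfl⟩ := hT w
  simpa using DFunLike.congr_fun h x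

end Derivative

namespace ContinuousLinearMap

variable {R E : Type*} [Semiring R] [TopologicalSpace E] [AddCommMonoid E] [Module R E]

theorem units_apply_eq_iff (u : (E →L[R] E)ˣ) {x y : E} :
    (u : E →L[R] E) x = y ↔ x = (↑u⁻¹ : E →L[R] E) y := by
  constructor
  · rintro rfl
    rw [← mul_apply_eq_comp, Units.inv_mul, one_apply_eq_self]
  · rintro rfl
    rw [← mul_apply_eq_comp, Units.mul_inv, one_apply_eq_self]

theorem surjective_units (u : (E →L[R] E)ˣ) : Function.Surjective (u : E →L[R] E) :=
  fun _ => ⟨_, (units_apply_eq_iff u).2 rfl⟩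

end ContinuousLinearMap

theorem stmt7_general {Ω : Type*} [MeasureSpace Ω] [IsProbabilityMeasure (volume : Measure Ω)]
    {d : ℕ}
    (z₀ : Ω → EuclideanSpace ℝ (Fin d))
    (hz : MemLp z₀ 2 (volume : Measure Ω))
    (hmean : ∫ ω, z₀ ω = 0)
    (Sig₀ : EuclideanSpace ℝ (Fin d) →L[ℝ] EuclideanSpace ℝ (Fin d))
    (μmap : EuclideanSpace ℝ (Fin d) →L[ℝ] EuclideanSpace ℝ (Fin d))
    (hμ : ‖μmap‖ < 1)
    (μ₀ : EuclideanSpace ℝ (Fin d))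
    (A : EuclideanSpace ℝ (Fin d) →L[ℝ] EuclideanSpace ℝ (Fin d))
    (hAsa : IsSelfAdjoint A)
    (hApos : ∀ x : EuclideanSpace ℝ (Fin d), x ≠ 0 → 0 < (@inner ℝ _ _ x (A x)))
    (PR : EuclideanSpace ℝ (Fin d) → ℝ)
    (hPR : ∀ θ : EuclideanSpace ℝ (Fin d),
      PR θ = ∫ ω, (@inner ℝ _ _ (θ - (Sig₀ (z₀ ω) + μ₀ + μmap θ))
        (A (θ - (Sig₀ (z₀ ω) + μ₀ + μmap θ)))) / 2) :
    (∀ θ : EuclideanSpace ℝ (Fin d),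
      fderiv ℝ PR θ = 0 ↔
        θ = (((Units.oneSub μmap hμ)⁻¹ :
          (EuclideanSpace ℝ (Fin d) →L[ℝ] EuclideanSpace ℝ (Fin d))ˣ) :
          EuclideanSpace ℝ (Fin d) →L[ℝ] EuclideanSpace ℝ (Fin d)) μ₀) ∧
    (∀ θ' : EuclideanSpace ℝ (Fin d),
      PR ((((Units.oneSub μmap hμ)⁻¹ :
          (EuclideanSpace ℝ (Fin d) →L[ℝ] EuclideanSpace ℝ (Fin d))ˣ) :
          EuclideanSpace ℝ (Fin d) →L[ℝ] EuclideanSpace ℝ (Fin d)) μ₀) ≤ PR θ') := by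
  set u := Units.oneSub μmap hμ
  set C := ∫ ω, ⟪Sig₀ (z₀ ω), A (Sig₀ (z₀ ω))⟫
  have hPR_quad : ∀ θ, PR θ = ⟪(u : _ →L[ℝ] _) θ - μ₀, A ((u : _ →L[ℝ] _) θ - μ₀)⟫ / 2 + C / 2 := by
    intro θ
    have hshift : ∀ ω, θ - (Sig₀ (z₀ ω) + μ₀ + μmap θ) = ((u : _ →L[ℝ] _) θ - μ₀) - Sig₀ (z₀ ω) :=
      fun ω => by simp only [u, Units.val_oneSub, sub_apply, one_apply_eq_self]; abel
    have hcentred : ∫ ω, Sig₀ (z₀ ω) = 0 := by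
      rw [Sig₀.integral_comp_comm (hz.integrable one_le_two), hmean, map_zero]
    rw [hPR, integral_div, ← add_div, ← integral_inner_sub_apply_sub_of_integral_eq_zero A
      (g := fun ω => Sig₀ (z₀ ω)) (Sig₀.comp_memLp' hz) hcentred]
    exact congrArg (· / 2) (integral_congr_ae (.of_forall fun ω =>
      congrArg (fun w => ⟪w, A w⟫) (hshift ω)))
  have hderiv : ∀ θ, HasFDerivAt PR
      ((innerSL ℝ (A ((u : _ →L[ℝ] _) θ - μ₀))).comp (u : _ →L[ℝ] _)) θ := fun θ => by
    rw [show PR = _ from funext hPR_quad]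
    exact (hAsa.isSymmetric.hasFDerivAt_inner_sub_apply_sub_div_two _ μ₀ θ).add_const _
  have hA_eq_zero : ∀ x, A x = 0 ↔ x = 0 := fun x =>
    ⟨fun h => by_contra fun hx => (hApos x hx).ne' (by rw [h, inner_zero_right]),
      fun h => by rw [h, map_zero]⟩
  have hA_nonneg : ∀ x, 0 ≤ ⟪x, A x⟫ := fun x => by
    rcases eq_or_ne x 0 with rfl | hx
    · rw [inner_zero_left]
    · exact (hApos x hx).le
  refine ⟨fun θ => ?_, fun θ' => ?_⟩
  · rw [(hderiv θ).fderiv, innerSL_comp_eq_zero_iff (ContinuousLinearMap.surjective_units u),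
      hA_eq_zero, sub_eq_zero, ContinuousLinearMap.units_apply_eq_iff]
  · rw [hPR_quad, hPR_quad, (ContinuousLinearMap.units_apply_eq_iff u).2 rfl, sub_self,
      map_zero, inner_zero_left]
    linarith [hA_nonneg ((u : _ →L[ℝ] _) θ' - μ₀)]

/-- Pure mean shift with Mahalanobis loss: every stationary point of the performative
risk equals `(I - μ)⁻¹ μ₀`, and that point is a global minimizer of `PR`; hence the
performatively optimal, performatively stable, and stationary solution sets coincide. -/
theorem stmt7 {Ω : Type*} [MeasureSpace Ω] [IsProbabilityMeasure (volume : Measure Ω)]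
    {d : ℕ}
    (z₀ : Ω → EuclideanSpace ℝ (Fin d))
    (hz : MemLp z₀ 2 (volume : Measure Ω))
    (hmean : ∫ ω, z₀ ω = 0)
    (hcov : ∀ x y : EuclideanSpace ℝ (Fin d),
      ∫ ω, (@inner ℝ _ _ x (z₀ ω)) * (@inner ℝ _ _ (z₀ ω) y) = @inner ℝ _ _ x y)
    (Sig₀ : EuclideanSpace ℝ (Fin d) →L[ℝ] EuclideanSpace ℝ (Fin d))
    (hSig₀ : Function.Bijective Sig₀)
    (μmap : EuclideanSpace ℝ (Fin d) →L[ℝ] EuclideanSpace ℝ (Fin d))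
    (hμ : ‖μmap‖ < 1)
    (μ₀ : EuclideanSpace ℝ (Fin d))
    (A : EuclideanSpace ℝ (Fin d) →L[ℝ] EuclideanSpace ℝ (Fin d))
    (hAsa : IsSelfAdjoint A)
    (hApos : ∀ x : EuclideanSpace ℝ (Fin d), x ≠ 0 → 0 < (@inner ℝ _ _ x (A x)))
    (PR : EuclideanSpace ℝ (Fin d) → ℝ)
    (hPR : ∀ θ : EuclideanSpace ℝ (Fin d),
      PR θ = ∫ ω, (@inner ℝ _ _ (θ - (Sig₀ (z₀ ω) + μ₀ + μmap θ))
        (A (θ - (Sig₀ (z₀ ω) + μ₀ + μmap θ)))) / 2) :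
    (∀ θ : EuclideanSpace ℝ (Fin d),
      fderiv ℝ PR θ = 0 ↔
        θ = (((Units.oneSub μmap hμ)⁻¹ :
          (EuclideanSpace ℝ (Fin d) →L[ℝ] EuclideanSpace ℝ (Fin d))ˣ) :
          EuclideanSpace ℝ (Fin d) →L[ℝ] EuclideanSpace ℝ (Fin d)) μ₀) ∧
    (∀ θ' : EuclideanSpace ℝ (Fin d),
      PR ((((Units.oneSub μmap hμ)⁻¹ :
          (EuclideanSpace ℝ (Fin d) →L[ℝ] EuclideanSpace ℝ (Fin d))ˣ) :
          EuclideanSpace ℝ (Fin d) →L[ℝ] EuclideanSpace ℝ (Fin d)) μ₀) ≤ PR θ') :=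
  stmt7_general z₀ hz hmean Sig₀ μmap hμ μ₀ A hAsa hApos PR hPR
end

section
/- For the scalar covariance-shift model with squared loss, regularized repeated risk minimization with regularizer R(θ,θ_t) = θ²/2 and constant regularization parameter λ* = σ(μ₀σ + (1-μ)σ₀)/(μ₀(1-μ) - σ₀σ) has fixed point equal to θ_PO = ((1-μ)μ₀ - σ₀σ)/(σ² + (1-μ)²). -/
/-! Subtracting `μ θ̂` turns the fixed-point equation into `θ̂ (1 + λ* - μ) = μ₀`, and with
`D = μ₀(1-μ) - σ₀σ` the choice of `λ*` makes `1 + λ* - μ = μ₀ (σ² + (1-μ)²) / D`,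
so `θ̂ = D / (σ² + (1-μ)²)`. -/

lemma one_add_regParam_sub_eq (σ₀ σ μ₀ μ : ℝ) (hD : μ₀ * (1 - μ) - σ₀ * σ ≠ 0) :
    1 + σ * (μ₀ * σ + (1 - μ) * σ₀) / (μ₀ * (1 - μ) - σ₀ * σ) - μ
      = μ₀ * (σ ^ 2 + (1 - μ) ^ 2) / (μ₀ * (1 - μ) - σ₀ * σ) := by
  rw [eq_div_iff hD, sub_mul, add_mul, div_mul_cancel₀ _ hD]
  ring

theorem stmt12_general (σ₀ σ μ₀ μ θhat : ℝ)
    (hμ : μ < 1)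
    (hμ₀ : μ₀ ≠ 0) (hD : μ₀ * (1 - μ) - σ₀ * σ ≠ 0)
    (hfix : θhat * (1 + σ * (μ₀ * σ + (1 - μ) * σ₀) / (μ₀ * (1 - μ) - σ₀ * σ))
      = μ₀ + μ * θhat) :
    θhat = ((1 - μ) * μ₀ - σ₀ * σ) / (σ ^ 2 + (1 - μ) ^ 2) := by
  have hS : σ ^ 2 + (1 - μ) ^ 2 ≠ 0 := by
    have : 0 < 1 - μ := sub_pos.mpr hμ
    positivity
  have hθ : θhat * (μ₀ * (σ ^ 2 + (1 - μ) ^ 2) / (μ₀ * (1 - μ) - σ₀ * σ)) = μ₀ := by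
    rw [← one_add_regParam_sub_eq σ₀ σ μ₀ μ hD]
    linear_combination hfix
  rw [mul_div_assoc', div_eq_iff hD] at hθ
  rw [eq_div_iff hS]
  exact mul_left_cancel₀ hμ₀ (by linear_combination hθ)

/-- Scalar covariance-shift model with squared loss: regularized repeated risk
minimization with `R(θ,θ_t) = θ²/2` and `λ* = σ(μ₀σ + (1-μ)σ₀)/(μ₀(1-μ) - σ₀σ)` has
fixed point (satisfying `θ̂(1+λ*) = μ₀ + μθ̂`) equal to
`θ_PO = ((1-μ)μ₀ - σ₀σ)/(σ² + (1-μ)²)`. -/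
theorem stmt12 (σ₀ σ μ₀ μ θhat : ℝ)
    (hσ₀ : 0 < σ₀) (hσ : 0 < σ) (hμ : μ < 1)
    (hμ₀ : μ₀ ≠ 0) (hD : μ₀ * (1 - μ) - σ₀ * σ ≠ 0)
    (hfix : θhat * (1 + σ * (μ₀ * σ + (1 - μ) * σ₀) / (μ₀ * (1 - μ) - σ₀ * σ))
      = μ₀ + μ * θhat) :
    θhat = ((1 - μ) * μ₀ - σ₀ * σ) / (σ ^ 2 + (1 - μ) ^ 2) :=
  stmt12_general σ₀ σ μ₀ μ θhat hμ hμ₀ hD hfix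
end

section
/- With time-growing regularization λ_t = t+1 under the Gaussian mean-shift model, the iterates satisfy θ_t - θ_PS = [Π_{i=1}^t (i+μ)/(i+1)](θ₀ - θ_PS) + Σ_{i=1}^t [Π_{j=i}^t (j+μ)/(j+1)]·Z_i/(i+μ), and the deterministic product Π_{i=1}^t (i+μ)/(i+1) converges to 0 as t → ∞ when μ < 1. -/
/-!
Subtracting the fixed point `θ_PS` turns the update into the linear recursion
`e_t = c_t e_{t-1} + Z_t/(t+1)` with `c_t = (t+μ)/(t+1)`, which unrolls into the stated
formula. Since `c_t = 1 - (1-μ)/(t+1) ≤ exp (-(1-μ)/(t+1))`, the product of the `c_i` is at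
most `exp (-(1-μ) Σ 1/(i+1))`, and the harmonic series diverges.
-/

open Finset Filter Topology

section Unroll

variable {R M : Type*} [CommSemiring R] [AddCommMonoid M] [Module R M]

theorem eq_prod_smul_add_sum_of_succ_eq (c : ℕ → R) (e w : ℕ → M)
    (h : ∀ t, e (t + 1) = c (t + 1) • e t + w (t + 1)) (t : ℕ) :
    e t = (∏ i ∈ Icc 1 t, c i) • e 0 + ∑ i ∈ Icc 1 t, (∏ j ∈ Ioc i t, c j) • w i := by
  induction t with
  | zero => simp
  | succ t ih =>
    have hcoeff : ∀ i ∈ Icc 1 t,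
        (∏ j ∈ Ioc i (t + 1), c j) • w i = c (t + 1) • (∏ j ∈ Ioc i t, c j) • w i := by
      intro i hi
      rw [prod_Ioc_succ_top (mem_Icc.1 hi).2, smul_smul, mul_comm]
    rw [h, ih, prod_Icc_succ_top (by omega), sum_Icc_succ_top (by omega), sum_congr rfl hcoeff,
      Ioc_self, prod_empty, one_smul, smul_add, smul_sum, smul_smul, mul_comm, add_assoc]

end Unroll

theorem Real.tendsto_prod_one_sub_of_tendsto_sum {ι α : Type*} {l : Filter α} {s : α → Finset ι}
    {u : ι → ℝ} (hu : ∀ i, u i ≤ 1)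
    (hsum : Tendsto (fun a => ∑ i ∈ s a, u i) l atTop) :
    Tendsto (fun a => ∏ i ∈ s a, (1 - u i)) l (𝓝 0) := by
  have hexp : Tendsto (fun a => Real.exp (-∑ i ∈ s a, u i)) l (𝓝 0) :=
    Real.tendsto_exp_atBot.comp (tendsto_neg_atBot_iff.2 hsum)
  refine tendsto_of_tendsto_of_tendsto_of_le_of_le tendsto_const_nhds hexp
    (fun a => prod_nonneg fun i _ => sub_nonneg.2 (hu i)) fun a => ?_
  calc ∏ i ∈ s a, (1 - u i) ≤ ∏ i ∈ s a, Real.exp (-u i) :=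
        prod_le_prod (fun i _ => sub_nonneg.2 (hu i)) fun i _ => by
          linarith [Real.add_one_le_exp (-u i)]
    _ = Real.exp (-∑ i ∈ s a, u i) := by rw [← sum_neg_distrib, Real.exp_sum]

theorem tendsto_sum_Icc_one_div_add_one_atTop :
    Tendsto (fun t : ℕ => ∑ i ∈ Icc 1 t, 1 / ((i : ℝ) + 1)) atTop atTop := by
  have hshift : ¬ Summable fun k : ℕ => 1 / ((k : ℝ) + 2) := by
    have := (summable_nat_add_iff 2).not.2 Real.not_summable_one_div_natCast
    simpa [add_comm] using this
  have key := (not_summable_iff_tendsto_nat_atTop_of_nonneg fun k => by positivity).1 hshift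
  refine key.congr fun t => ?_
  rw [← Ico_add_one_right_eq_Icc, sum_Ico_eq_sum_range]
  simp only [add_tsub_cancel_right]
  refine sum_congr rfl fun k _ => ?_
  push_cast; ring

section RegularizedERM

variable {μ : ℝ}

theorem prod_Ioc_mul_one_div_eq (h0μ : 0 ≤ μ) {i t : ℕ} (hi : 1 ≤ i) (hit : i ≤ t) :
    (∏ j ∈ Ioc i t, ((j : ℝ) + μ) / ((j : ℝ) + 1)) * (1 / ((i : ℝ) + 1))
      = (∏ j ∈ Icc i t, ((j : ℝ) + μ) / ((j : ℝ) + 1)) / ((i : ℝ) + μ) := by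
  have : (1 : ℝ) ≤ i := by exact_mod_cast hi
  rw [← mul_prod_Ioc_eq_prod_Icc hit]
  field_simp

theorem tendsto_prod_Icc_add_div_add_one (h0μ : 0 ≤ μ) (hμ : μ < 1) :
    Tendsto (fun t : ℕ => ∏ i ∈ Icc 1 t, ((i : ℝ) + μ) / ((i : ℝ) + 1)) atTop (𝓝 0) := by
  have hsum : Tendsto (fun t : ℕ => ∑ i ∈ Icc 1 t, (1 - μ) / ((i : ℝ) + 1)) atTop atTop := by
    simpa only [mul_one_div, mul_sum] using
      tendsto_sum_Icc_one_div_add_one_atTop.const_mul_atTop (sub_pos.2 hμ)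
  refine (Real.tendsto_prod_one_sub_of_tendsto_sum (fun i => ?_) hsum).congr fun t =>
    prod_congr rfl fun i _ => ?_
  · rw [div_le_one (by positivity)]
    linarith [i.cast_nonneg (α := ℝ)]
  · field_simp
    ring

end RegularizedERM

/-- With time-growing regularization `λ_{t-1} = t`, the iterates of regularized repeated
ERM satisfy the unrolled identity
`θ_t - θ_PS = [Π_{i=1}^t (i+μ)/(i+1)](θ₀ - θ_PS) + Σ_{i=1}^t [Π_{j=i}^t (j+μ)/(j+1)] Z_i/(i+μ)`,
and the product `Π_{i=1}^t (i+μ)/(i+1)` tends to `0` as `t → ∞` when `μ < 1`. -/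
theorem stmt17 {d : ℕ} (μ : ℝ) (h0μ : 0 ≤ μ) (hμ : μ < 1)
    (μ₀ θPS : EuclideanSpace ℝ (Fin d))
    (hPS : θPS = (1 / (1 - μ)) • μ₀)
    (Z θ : ℕ → EuclideanSpace ℝ (Fin d))
    (hrec : ∀ t : ℕ, θ (t + 1)
      = (1 / ((t : ℝ) + 2)) • μ₀ + (((t : ℝ) + 1 + μ) / ((t : ℝ) + 2)) • θ t
        + (1 / ((t : ℝ) + 2)) • Z (t + 1)) :
    (∀ t : ℕ, θ t - θPS
      = (∏ i ∈ Finset.Icc 1 t, ((i : ℝ) + μ) / ((i : ℝ) + 1)) • (θ 0 - θPS)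
        + ∑ i ∈ Finset.Icc 1 t,
            ((∏ j ∈ Finset.Icc i t, ((j : ℝ) + μ) / ((j : ℝ) + 1)) / ((i : ℝ) + μ)) • Z i) ∧
    Filter.Tendsto (fun t : ℕ => ∏ i ∈ Finset.Icc 1 t, ((i : ℝ) + μ) / ((i : ℝ) + 1))
      Filter.atTop (nhds 0) := by
  have herr : ∀ t : ℕ, θ (t + 1) - θPS
      = ((((t + 1 : ℕ) : ℝ) + μ) / (((t + 1 : ℕ) : ℝ) + 1)) • (θ t - θPS)
        + (1 / (((t + 1 : ℕ) : ℝ) + 1)) • Z (t + 1) := by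
    intro t
    have : (1 : ℝ) - μ ≠ 0 := by linarith
    rw [hrec t, hPS]
    push_cast
    match_scalars <;> field_simp <;> ring
  refine ⟨fun t => ?_, tendsto_prod_Icc_add_div_add_one h0μ hμ⟩
  rw [eq_prod_smul_add_sum_of_succ_eq (fun j : ℕ => ((j : ℝ) + μ) / ((j : ℝ) + 1))
    (fun t => θ t - θPS) (fun i => (1 / ((i : ℝ) + 1)) • Z i) herr t]
  refine congrArg _ (sum_congr rfl fun i hi => ?_)
  rw [smul_smul, prod_Ioc_mul_one_div_eq h0μ (mem_Icc.1 hi).1 (mem_Icc.1 hi).2]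
end

section
/- For the scalar linear shift with squared loss, θ_PS = θ_PO if and only if σ·(μ₀σ + σ₀(1-μ)) = 0; in particular, when σ₀, σ > 0, μ₀ > 0, and μ < 1, the performatively stable and optimal points are distinct. -/
/-! Writing `a = 1 - μ` and clearing the (nonzero) denominators, `θ_PS = θ_PO` becomes
`μ₀ (σ² + a²) = a (a μ₀ - σ₀ σ)`, whose difference of sides is exactly `σ (μ₀ σ + σ₀ a)`.
With `σ₀, σ, μ₀ > 0` and `a > 0` this product is positive. -/

theorem div_eq_div_sq_add_sq_iff {a σ₀ σ μ₀ : ℝ} (ha : a ≠ 0) :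
    μ₀ / a = (a * μ₀ - σ₀ * σ) / (σ ^ 2 + a ^ 2) ↔ σ * (μ₀ * σ + σ₀ * a) = 0 := by
  rw [div_eq_div_iff ha (by positivity)]
  constructor <;> intro h <;> linear_combination h

theorem stmt19_general (σ₀ σ μ₀ μ : ℝ) (hμ : μ < 1)
    (θPS θPO : ℝ)
    (hPS : θPS = μ₀ / (1 - μ))
    (hPO : θPO = ((1 - μ) * μ₀ - σ₀ * σ) / (σ ^ 2 + (1 - μ) ^ 2)) :
    (θPS = θPO ↔ σ * (μ₀ * σ + σ₀ * (1 - μ)) = 0)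
    ∧ (0 < σ₀ → 0 < σ → 0 < μ₀ → θPS ≠ θPO) := by
  have ha : 0 < 1 - μ := sub_pos.2 hμ
  have key : θPS = θPO ↔ σ * (μ₀ * σ + σ₀ * (1 - μ)) = 0 := by
    rw [hPS, hPO]
    exact div_eq_div_sq_add_sq_iff ha.ne'
  refine ⟨key, fun hσ₀ hσ hμ₀ => ?_⟩
  rw [Ne, key]
  exact (mul_pos hσ (add_pos (mul_pos hμ₀ hσ) (mul_pos hσ₀ ha))).ne'

/-- For the scalar linear shift with squared loss, `θ_PS = θ_PO` iff
`σ·(μ₀σ + σ₀(1-μ)) = 0`; in particular, when `σ₀, σ > 0`, `μ₀ > 0`, and `μ < 1`,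
the performatively stable and optimal points are distinct. -/
theorem stmt19 (σ₀ σ μ₀ μ : ℝ) (hσ₀ : 0 ≤ σ₀) (hσ : 0 ≤ σ) (hμ : μ < 1)
    (θPS θPO : ℝ)
    (hPS : θPS = μ₀ / (1 - μ))
    (hPO : θPO = ((1 - μ) * μ₀ - σ₀ * σ) / (σ ^ 2 + (1 - μ) ^ 2)) :
    (θPS = θPO ↔ σ * (μ₀ * σ + σ₀ * (1 - μ)) = 0)
    ∧ (0 < σ₀ → 0 < σ → 0 < μ₀ → θPS ≠ θPO) :=
  stmt19_general σ₀ σ μ₀ μ hμ θPS θPO hPS hPO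
end
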